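/- Let 0 < p, q < 1. The elements f₁^k f₀ f₋₁^l and f₁^k f₋₁^l, for k, l ≥ 0, form a vector space basis of the ℂ-vector space P(S²_{pqφ}) (i.e. this family is linearly independent over ℂ and spans P(S²_{pqφ})). -/
import Mathlib

noncomputable section

/-- The free algebra ℂ⟨f₁, f₋₁, f₀⟩ (generator 0 is f₁, generator 1 is f₋₁,
generator 2 is f₀). -/
abbrev FreeSphere : Type := FreeAlgebra ℂ (Fin 3)

/-- f₁ in the free algebra. -/
def F1 : FreeSphere := FreeAlgebra.ι ℂ 0
/-- f₋₁ in the free algebra. -/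
def Fm1 : FreeSphere := FreeAlgebra.ι ℂ 1
/-- f₀ in the free algebra. -/
def F0 : FreeSphere := FreeAlgebra.ι ℂ 2

/-- The defining relations of P(S²_{pqφ}). -/
inductive sphereRel (p q : ℝ) : FreeSphere → FreeSphere → Prop
  | rel1 : sphereRel p q (Fm1 * F1)
      ((q : ℂ) • (F1 * Fm1) + ((p : ℂ) - (q : ℂ)) • F0 + ((1 : ℂ) - (p : ℂ)) • 1)
  | rel2 : sphereRel p q (F0 * F1) ((p : ℂ) • (F1 * F0) + ((1 : ℂ) - (p : ℂ)) • F1)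
  | rel3 : sphereRel p q (Fm1 * F0) ((p : ℂ) • (F0 * Fm1) + ((1 : ℂ) - (p : ℂ)) • Fm1)
  | rel4 : sphereRel p q ((1 - F0) * (F1 * Fm1 - F0)) 0

/-- The polynomial algebra P(S²_{pqφ}). -/
abbrev QSphere (p q : ℝ) : Type := RingQuot (sphereRel p q)

/-- The generator f₁ of P(S²_{pqφ}). -/
def f1 (p q : ℝ) : QSphere p q := RingQuot.mkAlgHom ℂ (sphereRel p q) F1
/-- The generator f₋₁ of P(S²_{pqφ}). -/
def fm1 (p q : ℝ) : QSphere p q := RingQuot.mkAlgHom ℂ (sphereRel p q) Fm1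
/-- The generator f₀ of P(S²_{pqφ}). -/
def f0 (p q : ℝ) : QSphere p q := RingQuot.mkAlgHom ℂ (sphereRel p q) F0

/-! ### A model of the relations on the free module with basis the normal-form monomials -/

namespace SphereModel

/-- Index type for normal-form monomials: `inl (k,l)` ↦ f₁^k f₀ f₋₁^l,
`inr (k,l)` ↦ f₁^k f₋₁^l. -/
abbrev B : Type := (ℕ × ℕ) ⊕ (ℕ × ℕ)

abbrev V : Type := B →₀ ℂ

def e (i : B) : V := Finsupp.single i 1

def shiftB : B → B
  | .inl (k, l) => .inl (k + 1, l)
  | .inr (k, l) => .inr (k + 1, l)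

def L1 : V →ₗ[ℂ] V := Finsupp.lmapDomain ℂ ℂ shiftB

@[simp] lemma L1_e (i : B) : L1 (e i) = e (shiftB i) := by
  simp [L1, e, Finsupp.mapDomain_single]

variable (P Q : ℂ)

def t0 : B → V
  | .inl (0, l) => e (.inl (0, l)) + P • e (.inl (1, l + 1)) - P • e (.inr (1, l + 1))
  | .inr (0, l) => e (.inl (0, l))
  | .inl (k + 1, l) => P • L1 (t0 (.inl (k, l))) + (1 - P) • e (.inl (k + 1, l))
  | .inr (k + 1, l) => P • L1 (t0 (.inr (k, l))) + (1 - P) • e (.inr (k + 1, l))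

def L0 : V →ₗ[ℂ] V := Finsupp.linearCombination ℂ (t0 P)

@[simp] lemma L0_e (i : B) : L0 P (e i) = t0 P i := by
  simp [L0, e, Finsupp.linearCombination_single]

def tm1 : B → V
  | .inl (0, l) => P • e (.inl (0, l + 1)) + (1 - P) • e (.inr (0, l + 1))
  | .inr (0, l) => e (.inr (0, l + 1))
  | .inl (k + 1, l) => Q • L1 (tm1 (.inl (k, l))) + (P - Q) • t0 P (.inl (k, l))
      + (1 - P) • e (.inl (k, l))
  | .inr (k + 1, l) => Q • L1 (tm1 (.inr (k, l))) + (P - Q) • t0 P (.inr (k, l))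
      + (1 - P) • e (.inr (k, l))

def Lm1 : V →ₗ[ℂ] V := Finsupp.linearCombination ℂ (tm1 P Q)

@[simp] lemma Lm1_e (i : B) : Lm1 P Q (e i) = tm1 P Q i := by
  simp [Lm1, e, Finsupp.linearCombination_single]

/-- rel2 as an operator identity. -/
lemma rel2_v (v : V) : L0 P (L1 v) = P • L1 (L0 P v) + (1 - P) • L1 v := by
  have : (L0 P).comp L1 = P • L1.comp (L0 P) + (1 - P) • L1 := by
    apply Finsupp.lhom_ext' ; intro i
    apply LinearMap.ext ; intro c
    have hc : Finsupp.single i c = c • e i := by simp [e, Finsupp.smul_single]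
    simp only [LinearMap.comp_apply, Finsupp.lsingle_apply, hc, map_smul,
      LinearMap.add_apply, LinearMap.smul_apply, L1_e, L0_e]
    rcases i with ⟨k, l⟩ | ⟨k, l⟩ <;>
      simp [shiftB, t0, smul_comm c]
  exact DFunLike.congr_fun this v

/-- rel1 as an operator identity. -/
lemma rel1_v (v : V) :
    Lm1 P Q (L1 v) = Q • L1 (Lm1 P Q v) + (P - Q) • L0 P v + (1 - P) • v := by
  have : (Lm1 P Q).comp L1
      = Q • L1.comp (Lm1 P Q) + (P - Q) • (L0 P) + (1 - P) • LinearMap.id := by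
    apply Finsupp.lhom_ext' ; intro i
    apply LinearMap.ext ; intro c
    have hc : Finsupp.single i c = c • e i := by simp [e, Finsupp.smul_single]
    simp only [LinearMap.comp_apply, Finsupp.lsingle_apply, hc, map_smul,
      LinearMap.add_apply, LinearMap.smul_apply, LinearMap.id_apply, L1_e, L0_e, Lm1_e]
    rcases i with ⟨k, l⟩ | ⟨k, l⟩ <;>
      simp [shiftB, tm1, smul_comm c]
  exact DFunLike.congr_fun this v

lemma t0_shift (i : B) :
    t0 P (shiftB i) = P • L1 (t0 P i) + (1 - P) • e (shiftB i) := by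
  rcases i with ⟨k, l⟩ | ⟨k, l⟩ <;> simp only [shiftB, t0]

lemma tm1_shift (i : B) :
    tm1 P Q (shiftB i) = Q • L1 (tm1 P Q i) + (P - Q) • t0 P i + (1 - P) • e i := by
  rcases i with ⟨k, l⟩ | ⟨k, l⟩ <;> simp only [shiftB, tm1]

lemma rel3_e : ∀ (i : B),
    Lm1 P Q (t0 P i) = P • L0 P (tm1 P Q i) + (1 - P) • tm1 P Q i := by
  have step : ∀ (i : B),
      (Lm1 P Q (t0 P i) = P • L0 P (tm1 P Q i) + (1 - P) • tm1 P Q i) →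
      Lm1 P Q (t0 P (shiftB i)) = P • L0 P (tm1 P Q (shiftB i))
        + (1 - P) • tm1 P Q (shiftB i) := by
    intro i ih
    rw [t0_shift, tm1_shift]
    simp only [map_add, map_smul, rel1_v, rel2_v, Lm1_e, L0_e, L1_e, ih, tm1_shift]
    try module
  rintro (⟨k, l⟩ | ⟨k, l⟩)
  · induction k with
    | zero =>
      simp only [t0, tm1, map_add, map_sub, map_smul, Lm1_e, L0_e, L1_e, shiftB]
      try module
    | succ k ih => exact step (.inl (k, l)) ih
  · induction k with
    | zero =>
      simp only [t0, tm1, map_add, map_sub, map_smul, Lm1_e, L0_e, L1_e, shiftB]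
      try module
    | succ k ih => exact step (.inr (k, l)) ih

lemma rel4_e : ∀ (i : B),
    L1 (tm1 P Q i) - t0 P i - L0 P (L1 (tm1 P Q i)) + L0 P (t0 P i) = 0 := by
  have step : ∀ (i : B),
      (L1 (tm1 P Q i) - t0 P i - L0 P (L1 (tm1 P Q i)) + L0 P (t0 P i) = 0) →
      L1 (tm1 P Q (shiftB i)) - t0 P (shiftB i)
        - L0 P (L1 (tm1 P Q (shiftB i))) + L0 P (t0 P (shiftB i)) = 0 := by
    intro i ih
    have hsolve : L0 P (L1 (tm1 P Q i))
        = L1 (tm1 P Q i) - t0 P i + L0 P (t0 P i) := by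
      linear_combination (norm := module) -ih
    have h1 : t0 P (shiftB i) = P • L1 (t0 P i) + (1 - P) • L1 (e i) := by
      rw [t0_shift, L1_e]
    rw [h1, tm1_shift]
    simp only [map_add, map_sub, map_smul, rel2_v, L0_e, hsolve]
    try module
  rintro (⟨k, l⟩ | ⟨k, l⟩)
  · induction k with
    | zero =>
      simp only [t0, tm1, map_add, map_sub, map_smul, L0_e, L1_e, shiftB]
      try module
    | succ k ih => exact step (.inl (k, l)) ih
  · induction k with
    | zero =>
      simp only [t0, tm1, map_add, map_sub, map_smul, L0_e, L1_e, shiftB]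
      try module
    | succ k ih => exact step (.inr (k, l)) ih

/-- The generators of the representation. -/
def g : Fin 3 → Module.End ℂ V := fun i =>
  if i = 0 then L1 else if i = 1 then Lm1 P Q else L0 P

lemma end_ext {A B' : Module.End ℂ V} (h : ∀ i, A (e i) = B' (e i)) : A = B' := by
  apply Finsupp.lhom_ext
  intro i c
  have hc : Finsupp.single i c = c • e i := by simp [e, Finsupp.smul_single]
  rw [hc, map_smul, map_smul, h i]

/-- The representation of the free algebra. -/
def φ : FreeSphere →ₐ[ℂ] Module.End ℂ V := FreeAlgebra.lift ℂ (g P Q)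

@[simp] lemma φ_F1 : φ P Q F1 = L1 := by
  simp [φ, F1, g]
@[simp] lemma φ_Fm1 : φ P Q Fm1 = Lm1 P Q := by
  simp [φ, Fm1, g]
@[simp] lemma φ_F0 : φ P Q F0 = L0 P := by
  simp [φ, F0, g]

variable (p q : ℝ)

lemma φ_rel : ∀ ⦃x y : FreeSphere⦄, sphereRel p q x y →
    φ (p : ℂ) (q : ℂ) x = φ (p : ℂ) (q : ℂ) y := by
  intro x y h
  induction h with
  | rel1 =>
    simp only [map_mul, map_add, map_smul, map_one, φ_F1, φ_Fm1, φ_F0]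
    apply end_ext
    intro i
    simp only [Module.End.mul_apply, LinearMap.add_apply, LinearMap.smul_apply,
      Module.End.one_apply, L1_e, Lm1_e, L0_e, tm1_shift]
  | rel2 =>
    simp only [map_mul, map_add, map_smul, φ_F1, φ_F0]
    apply end_ext
    intro i
    simp only [Module.End.mul_apply, LinearMap.add_apply, LinearMap.smul_apply,
      L1_e, L0_e, t0_shift]
  | rel3 =>
    simp only [map_mul, map_add, map_smul, φ_F1, φ_Fm1, φ_F0]
    apply end_ext
    intro i
    simp only [Module.End.mul_apply, LinearMap.add_apply, LinearMap.smul_apply,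
      Lm1_e, L0_e]
    exact rel3_e _ _ i
  | rel4 =>
    simp only [map_mul, map_sub, map_one, φ_F1, φ_Fm1, φ_F0, map_zero]
    apply end_ext
    intro i
    simp only [Module.End.mul_apply, LinearMap.sub_apply, Module.End.one_apply,
      LinearMap.zero_apply, map_sub, Lm1_e, L0_e]
    linear_combination (norm := module) rel4_e (p : ℂ) (q : ℂ) i

/-- The representation of the quotient algebra. -/
def ψ : QSphere p q →ₐ[ℂ] Module.End ℂ V :=
  RingQuot.liftAlgHom ℂ ⟨φ (p : ℂ) (q : ℂ), φ_rel p q⟩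

@[simp] lemma ψ_f1 : ψ p q (f1 p q) = L1 := by
  simp [ψ, f1]
@[simp] lemma ψ_fm1 : ψ p q (fm1 p q) = Lm1 (p : ℂ) (q : ℂ) := by
  simp [ψ, fm1]
@[simp] lemma ψ_f0 : ψ p q (f0 p q) = L0 (p : ℂ) := by
  simp [ψ, f0]

/-- The normal-form monomials in the quotient algebra. -/
def mono : B → QSphere p q :=
  Sum.elim
    (fun kl : ℕ × ℕ => f1 p q ^ kl.1 * f0 p q * fm1 p q ^ kl.2)
    (fun kl : ℕ × ℕ => f1 p q ^ kl.1 * fm1 p q ^ kl.2)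

/-- The vacuum vector, the image of `1 = f₁^0 f₋₁^0`. -/
def e0 : V := e (.inr (0, 0))

lemma iter_shift_inl (k l : ℕ) : shiftB^[k] (Sum.inl (0, l) : B) = Sum.inl (k, l) := by
  induction k with
  | zero => rfl
  | succ k ih => rw [Function.iterate_succ_apply', ih]; rfl

lemma iter_shift_inr (k l : ℕ) : shiftB^[k] (Sum.inr (0, l) : B) = Sum.inr (k, l) := by
  induction k with
  | zero => rfl
  | succ k ih => rw [Function.iterate_succ_apply', ih]; rfl

lemma L1_pow_e (k : ℕ) (i : B) : (L1 ^ k) (e i) = e (shiftB^[k] i) := by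
  induction k with
  | zero => rfl
  | succ k ih =>
    rw [pow_succ', Module.End.mul_apply, ih, L1_e, Function.iterate_succ_apply']

lemma Lm1_pow_e (l : ℕ) : ((Lm1 P Q) ^ l) (e (.inr (0, 0))) = e (.inr (0, l)) := by
  induction l with
  | zero => rfl
  | succ l ih =>
    rw [pow_succ', Module.End.mul_apply, ih, Lm1_e]
    simp [tm1]

variable (p q : ℝ)

lemma eval_inr (k l : ℕ) :
    (ψ p q (f1 p q ^ k * fm1 p q ^ l)) (e (.inr (0, 0))) = e (.inr (k, l)) := by
  rw [map_mul, map_pow, map_pow, ψ_f1, ψ_fm1, Module.End.mul_apply, Lm1_pow_e,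
    L1_pow_e, iter_shift_inr]

lemma eval_inl (k l : ℕ) :
    (ψ p q (f1 p q ^ k * f0 p q * fm1 p q ^ l)) (e (.inr (0, 0))) = e (.inl (k, l)) := by
  rw [map_mul, map_mul, map_pow, map_pow, ψ_f1, ψ_fm1, ψ_f0, Module.End.mul_apply,
    Module.End.mul_apply, Lm1_pow_e, L0_e]
  have : t0 (p : ℂ) (.inr (0, l)) = e (.inl (0, l)) := by simp [t0]
  rw [this, L1_pow_e, iter_shift_inl]

lemma eval_mono (i : B) :
    (ψ p q (mono p q i)) (e (.inr (0, 0))) = e i := by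
  rcases i with ⟨k, l⟩ | ⟨k, l⟩
  · exact eval_inl p q k l
  · exact eval_inr p q k l

/-! ### Linear independence -/

lemma mono_linearIndependent : LinearIndependent ℂ (mono p q) := by
  let Φ : QSphere p q →ₗ[ℂ] V :=
    (LinearMap.applyₗ (e (.inr (0, 0)) : V)).comp (ψ p q).toLinearMap
  apply LinearIndependent.of_comp Φ
  have hcomp : Φ ∘ mono p q = fun i : B => Finsupp.single i (1 : ℂ) := by
    funext i
    simp only [Function.comp_apply, Φ, LinearMap.comp_apply, AlgHom.toLinearMap_apply,
      LinearMap.applyₗ_apply_apply]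
    rw [eval_mono]
    rfl
  rw [hcomp]
  simpa using (Finsupp.basisSingleOne (R := ℂ) (ι := B)).linearIndependent

/-! ### Spanning -/

section Span

variable {p q}

local notation "S" => Submodule.span ℂ (Set.range (mono p q))

lemma mono_mem (i : B) : mono p q i ∈ S :=
  Submodule.subset_span (Set.mem_range_self i)

lemma mul_mem_span {g : QSphere p q} (hg : ∀ i, g * mono p q i ∈ S) :
    ∀ s ∈ S, g * s ∈ S := by
  intro s hs
  induction hs using Submodule.span_induction with
  | mem x hx => obtain ⟨i, rfl⟩ := hx; exact hg i
  | zero => simpa using Submodule.zero_mem _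
  | add x y hx hy ihx ihy => rw [mul_add]; exact Submodule.add_mem _ ihx ihy
  | smul a x hx ihx => rw [mul_smul_comm]; exact Submodule.smul_mem _ _ ihx

-- relations in the quotient
lemma qrel1 : fm1 p q * f1 p q = (q : ℂ) • (f1 p q * fm1 p q)
    + ((p : ℂ) - (q : ℂ)) • f0 p q + ((1 : ℂ) - (p : ℂ)) • 1 := by
  have h := RingQuot.mkAlgHom_rel ℂ (sphereRel.rel1 (p := p) (q := q))
  simpa only [map_mul, map_add, map_smul, map_one, f1, fm1, f0] using h

lemma qrel2 : f0 p q * f1 p q = (p : ℂ) • (f1 p q * f0 p q)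
    + ((1 : ℂ) - (p : ℂ)) • f1 p q := by
  have h := RingQuot.mkAlgHom_rel ℂ (sphereRel.rel2 (p := p) (q := q))
  simpa only [map_mul, map_add, map_smul, f1, f0] using h

lemma qrel3 : fm1 p q * f0 p q = (p : ℂ) • (f0 p q * fm1 p q)
    + ((1 : ℂ) - (p : ℂ)) • fm1 p q := by
  have h := RingQuot.mkAlgHom_rel ℂ (sphereRel.rel3 (p := p) (q := q))
  simpa only [map_mul, map_add, map_smul, f1, fm1, f0] using h

lemma qrel4 : (1 - f0 p q) * (f1 p q * fm1 p q - f0 p q) = 0 := by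
  have h := RingQuot.mkAlgHom_rel ℂ (sphereRel.rel4 (p := p) (q := q))
  simpa only [map_mul, map_sub, map_one, map_zero, f1, fm1, f0] using h

lemma qf0_sq : f0 p q * f0 p q
    = f0 p q + (f0 p q * (f1 p q * fm1 p q)) - f1 p q * fm1 p q := by
  have h := qrel4 (p := p) (q := q)
  rw [sub_mul, one_mul, mul_sub] at h
  linear_combination (norm := noncomm_ring) h

lemma f1_mul_mono (i : B) : f1 p q * mono p q i = mono p q (shiftB i) := by
  rcases i with ⟨k, l⟩ | ⟨k, l⟩ <;>
    simp [mono, shiftB, pow_succ', mul_assoc]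

lemma f1_mul_mem {s : QSphere p q} (hs : s ∈ S) : f1 p q * s ∈ S :=
  mul_mem_span (fun i => (f1_mul_mono i) ▸ mono_mem (shiftB i)) s hs

lemma f0_mul_mono (i : B) : f0 p q * mono p q i ∈ S := by
  rcases i with ⟨k, l⟩ | ⟨k, l⟩
  · induction k with
    | zero =>
      have key : f0 p q * mono p q (Sum.inl (0, l))
          = mono p q (Sum.inl (0, l)) + (p : ℂ) • mono p q (Sum.inl (1, l + 1))
            - (p : ℂ) • mono p q (Sum.inr (1, l + 1)) := by
        simp only [mono, Sum.elim_inl, Sum.elim_inr, pow_zero, one_mul, pow_one]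
        rw [← mul_assoc, qf0_sq]
        rw [sub_mul, add_mul, ← mul_assoc (f0 p q), qrel2, add_mul, smul_mul_assoc,
          smul_mul_assoc]
        simp only [mul_assoc, pow_succ', pow_zero, mul_one]
        simp only [add_mul, smul_mul_assoc, mul_assoc]
        module
      rw [key]
      exact Submodule.sub_mem _
        (Submodule.add_mem _ (mono_mem _) (Submodule.smul_mem _ _ (mono_mem _)))
        (Submodule.smul_mem _ _ (mono_mem _))
    | succ k ih =>
      have h : mono p q (Sum.inl (k + 1, l)) = f1 p q * mono p q (Sum.inl (k, l)) :=
        (f1_mul_mono (Sum.inl (k, l))).symm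
      rw [h, ← mul_assoc, qrel2, add_mul, smul_mul_assoc, smul_mul_assoc, mul_assoc]
      exact Submodule.add_mem _
        (Submodule.smul_mem _ _ (f1_mul_mem ih))
        (Submodule.smul_mem _ _ (f1_mul_mem (mono_mem _)))
  · induction k with
    | zero =>
      have key : f0 p q * mono p q (Sum.inr (0, l)) = mono p q (Sum.inl (0, l)) := by
        simp [mono]
      rw [key]; exact mono_mem _
    | succ k ih =>
      have h : mono p q (Sum.inr (k + 1, l)) = f1 p q * mono p q (Sum.inr (k, l)) :=
        (f1_mul_mono (Sum.inr (k, l))).symm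
      rw [h, ← mul_assoc, qrel2, add_mul, smul_mul_assoc, smul_mul_assoc, mul_assoc]
      exact Submodule.add_mem _
        (Submodule.smul_mem _ _ (f1_mul_mem ih))
        (Submodule.smul_mem _ _ (f1_mul_mem (mono_mem _)))

lemma fm1_mul_mono (i : B) : fm1 p q * mono p q i ∈ S := by
  rcases i with ⟨k, l⟩ | ⟨k, l⟩
  · induction k with
    | zero =>
      have key : fm1 p q * mono p q (Sum.inl (0, l))
          = (p : ℂ) • mono p q (Sum.inl (0, l + 1))
            + ((1 : ℂ) - (p : ℂ)) • mono p q (Sum.inr (0, l + 1)) := by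
        simp only [mono, Sum.elim_inl, Sum.elim_inr, pow_zero, one_mul]
        rw [← mul_assoc, qrel3, add_mul, smul_mul_assoc, smul_mul_assoc]
        simp only [mul_assoc, pow_succ', one_mul]
      rw [key]
      exact Submodule.add_mem _ (Submodule.smul_mem _ _ (mono_mem _))
        (Submodule.smul_mem _ _ (mono_mem _))
    | succ k ih =>
      have h : mono p q (Sum.inl (k + 1, l)) = f1 p q * mono p q (Sum.inl (k, l)) :=
        (f1_mul_mono (Sum.inl (k, l))).symm
      rw [h, ← mul_assoc, qrel1, add_mul, add_mul, smul_mul_assoc, smul_mul_assoc,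
        smul_mul_assoc, mul_assoc, one_mul]
      exact Submodule.add_mem _
        (Submodule.add_mem _
          (Submodule.smul_mem _ _ (f1_mul_mem ih))
          (Submodule.smul_mem _ _ (f0_mul_mono _)))
        (Submodule.smul_mem _ _ (mono_mem _))
  · induction k with
    | zero =>
      have key : fm1 p q * mono p q (Sum.inr (0, l)) = mono p q (Sum.inr (0, l + 1)) := by
        simp [mono, pow_succ', mul_assoc]
      rw [key]; exact mono_mem _
    | succ k ih =>
      have h : mono p q (Sum.inr (k + 1, l)) = f1 p q * mono p q (Sum.inr (k, l)) :=
        (f1_mul_mono (Sum.inr (k, l))).symm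
      rw [h, ← mul_assoc, qrel1, add_mul, add_mul, smul_mul_assoc, smul_mul_assoc,
        smul_mul_assoc, mul_assoc, one_mul]
      exact Submodule.add_mem _
        (Submodule.add_mem _
          (Submodule.smul_mem _ _ (f1_mul_mem ih))
          (Submodule.smul_mem _ _ (f0_mul_mono _)))
        (Submodule.smul_mem _ _ (mono_mem _))

lemma one_mem_span : (1 : QSphere p q) ∈ S := by
  have : (1 : QSphere p q) = mono p q (Sum.inr (0, 0)) := by simp [mono]
  rw [this]; exact mono_mem _

lemma mono_span_top : S = (⊤ : Submodule ℂ (QSphere p q)) := by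
  rw [eq_top_iff]
  rintro x -
  obtain ⟨y, rfl⟩ := RingQuot.mkAlgHom_surjective ℂ (sphereRel p q) x
  have key : ∀ y : FreeSphere, ∀ s ∈ S,
      RingQuot.mkAlgHom ℂ (sphereRel p q) y * s ∈ S := by
    intro y
    induction y using FreeAlgebra.induction with
    | grade0 r =>
      intro s hs
      rw [AlgHom.commutes, Algebra.algebraMap_eq_smul_one, smul_mul_assoc, one_mul]
      exact Submodule.smul_mem _ _ hs
    | grade1 x =>
      intro s hs
      fin_cases x
      · exact mul_mem_span
          (fun i => (f1_mul_mono i) ▸ mono_mem (shiftB i)) s hs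
      · exact mul_mem_span (fun i => fm1_mul_mono i) s hs
      · exact mul_mem_span (fun i => f0_mul_mono i) s hs
    | mul a b ha hb =>
      intro s hs
      rw [map_mul, mul_assoc]
      exact ha _ (hb s hs)
    | add a b ha hb =>
      intro s hs
      rw [map_add, add_mul]
      exact Submodule.add_mem _ (ha s hs) (hb s hs)
  have := key y 1 one_mem_span
  simpa using this

end Span

end SphereModel

/-- For 0 < p, q < 1, the elements f₁^k f₀ f₋₁^l and f₁^k f₋₁^l (k, l ≥ 0)
form a vector space basis of P(S²_{pqφ}). -/
theorem sphere_monomial_basis (p q : ℝ) (hp0 : 0 < p) (hp1 : p < 1)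
    (hq0 : 0 < q) (hq1 : q < 1) :
    LinearIndependent ℂ
      (Sum.elim
        (fun kl : ℕ × ℕ => f1 p q ^ kl.1 * f0 p q * fm1 p q ^ kl.2)
        (fun kl : ℕ × ℕ => f1 p q ^ kl.1 * fm1 p q ^ kl.2)) ∧
    Submodule.span ℂ
      (Set.range
        (Sum.elim
          (fun kl : ℕ × ℕ => f1 p q ^ kl.1 * f0 p q * fm1 p q ^ kl.2)
          (fun kl : ℕ × ℕ => f1 p q ^ kl.1 * fm1 p q ^ kl.2))) = ⊤ :=
  ⟨SphereModel.mono_linearIndependent p q, SphereModel.mono_span_top⟩
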